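/- Let n ≥ 1, k > 0, c > 0, δ > 0, let H be a symmetric positive definite real n×n matrix, θ* ∈ ℝⁿ, h₀ ∈ ℝ, and let h₁ ∈ ℝⁿ be nonzero. Define max_δ(x) := (x + √(x² + δ))/2 and h(θ) := h₀ + h₁ᵀ(θ − θ*). Suppose θ̃_r : [0,∞) → ℝⁿ is a differentiable solution of the ODE θ̃_r' = −k H θ̃_r + (h₁/‖h₁‖²) · max_δ(k θ̃_rᵀ H h₁ − c(h₀ + h₁ᵀθ̃_r)). Then h(θ̃_r(t) + θ*) ≥ h(θ̃_r(0) + θ*) e^{−ct} for all t ≥ 0; in particular the set {θ̃ ∈ ℝⁿ : h(θ̃ + θ*) ≥ 0} is forward invariant for this ODE. -/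

import Mathlib

noncomputable section
open Matrix

/-- The smooth max approximation `max_δ(x) = (x + √(x² + δ))/2`. -/
def maxDelta (δ x : ℝ) : ℝ := (x + Real.sqrt (x ^ 2 + δ)) / 2

/-- The linear barrier `h(θ) = h₀ + h₁ᵀ(θ−θ*)`. -/
def hfun (n : ℕ) (h₀ : ℝ) (h₁ : Fin n → ℝ) (θs : Fin n → ℝ) (θ : Fin n → ℝ) : ℝ :=
  h₀ + h₁ ⬝ᵥ (θ - θs)

/-- Right-hand side of the reduced model
`θ̃' = −kHθ̃ + (h₁/‖h₁‖²) max_δ(kθ̃ᵀHh₁ − c(h₀ + h₁ᵀθ̃))`. -/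
def reducedRHS (n : ℕ) (k c δ : ℝ) (H : Matrix (Fin n) (Fin n) ℝ) (h₀ : ℝ)
    (h₁ : Fin n → ℝ) (θ : Fin n → ℝ) : Fin n → ℝ :=
  (-k) • (H *ᵥ θ) +
    ((h₁ ⬝ᵥ h₁)⁻¹ * maxDelta δ (k * (θ ⬝ᵥ (H *ᵥ h₁)) - c * (h₀ + h₁ ⬝ᵥ θ))) • h₁

/-! Write `φ(t) = h(θ̃_r(t) + θ*) = h₀ + h₁ᵀθ̃_r(t)`. Pairing the ODE with `h₁` normalises away
the factor `h₁/‖h₁‖²`, and by symmetry of `H` the drift contributes `−k θ̃_rᵀHh₁`, so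
`φ' = −k θ̃_rᵀHh₁ + max_δ(k θ̃_rᵀHh₁ − cφ) ≥ −cφ` since `max_δ(x) ≥ x`.
Hence `φ(t) e^{ct}` is nondecreasing. -/

lemma le_maxDelta {δ : ℝ} (hδ : 0 ≤ δ) (x : ℝ) : x ≤ maxDelta δ x := by
  have hsqrt : |x| ≤ Real.sqrt (x ^ 2 + δ) := by
    rw [← Real.sqrt_sq_eq_abs]
    exact Real.sqrt_le_sqrt (by linarith)
  unfold maxDelta
  linarith [le_abs_self x]

lemma hfun_add_center (n : ℕ) (h₀ : ℝ) (h₁ θs θ : Fin n → ℝ) :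
    hfun n h₀ h₁ θs (θ + θs) = h₀ + h₁ ⬝ᵥ θ := by
  simp [hfun]

theorem HasDerivAt.const_dotProduct {𝕜 ι : Type*} [NontriviallyNormedField 𝕜] [Fintype ι]
    {f : 𝕜 → ι → 𝕜} {f' : ι → 𝕜} {t : 𝕜} (v : ι → 𝕜) (hf : HasDerivAt f f' t) :
    HasDerivAt (fun s => v ⬝ᵥ f s) (v ⬝ᵥ f') t := by
  simpa only [dotProduct] using
    HasDerivAt.fun_sum fun i _ => (hasDerivAt_pi.mp hf i).const_mul (v i)

lemma dotProduct_reducedRHS {n : ℕ} (k c δ : ℝ) {H : Matrix (Fin n) (Fin n) ℝ} (hH : H.IsSymm)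
    (h₀ : ℝ) {h₁ : Fin n → ℝ} (hh₁ : h₁ ≠ 0) (θ : Fin n → ℝ) :
    h₁ ⬝ᵥ reducedRHS n k c δ H h₀ h₁ θ =
      -k * (θ ⬝ᵥ (H *ᵥ h₁)) + maxDelta δ (k * (θ ⬝ᵥ (H *ᵥ h₁)) - c * (h₀ + h₁ ⬝ᵥ θ)) := by
  have hsymm : h₁ ⬝ᵥ (H *ᵥ θ) = θ ⬝ᵥ (H *ᵥ h₁) := by
    rw [dotProduct_mulVec, dotProduct_comm, ← mulVec_transpose, hH.eq]
  have hnorm : h₁ ⬝ᵥ h₁ ≠ 0 := fun h => hh₁ (dotProduct_self_eq_zero.mp h)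
  simp only [reducedRHS, dotProduct_add, dotProduct_smul, smul_eq_mul, hsymm]
  field_simp

lemma neg_mul_le_dotProduct_reducedRHS {n : ℕ} (k c : ℝ) {δ : ℝ} (hδ : 0 ≤ δ)
    {H : Matrix (Fin n) (Fin n) ℝ} (hH : H.IsSymm) (h₀ : ℝ) {h₁ : Fin n → ℝ} (hh₁ : h₁ ≠ 0)
    (θ : Fin n → ℝ) :
    -c * (h₀ + h₁ ⬝ᵥ θ) ≤ h₁ ⬝ᵥ reducedRHS n k c δ H h₀ h₁ θ := by
  rw [dotProduct_reducedRHS k c δ hH h₀ hh₁]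
  linarith [le_maxDelta hδ (k * (θ ⬝ᵥ (H *ᵥ h₁)) - c * (h₀ + h₁ ⬝ᵥ θ))]

lemma mul_exp_le_of_hasDerivAt_ge {φ φ' : ℝ → ℝ} (c : ℝ)
    (hφ : ∀ t, 0 ≤ t → HasDerivAt φ (φ' t) t) (hφ' : ∀ t, 0 ≤ t → -c * φ t ≤ φ' t)
    {t : ℝ} (ht : 0 ≤ t) :
    φ 0 * Real.exp (-c * t) ≤ φ t := by
  have hderiv : ∀ s, 0 ≤ s → HasDerivAt (fun s => φ s * Real.exp (c * s))
      (φ' s * Real.exp (c * s) + φ s * (Real.exp (c * s) * c)) s := fun s hs => by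
    simpa using (hφ s hs).fun_mul ((hasDerivAt_id' s).const_mul c).exp
  have hmono : MonotoneOn (fun s => φ s * Real.exp (c * s)) (Set.Ici 0) := by
    refine monotoneOn_of_hasDerivWithinAt_nonneg (convex_Ici 0)
      (fun s hs => (hderiv s hs).continuousAt.continuousWithinAt)
      (fun s hs => (hderiv s (interior_subset hs)).hasDerivWithinAt) fun s hs => ?_
    have hs : 0 ≤ s := interior_subset hs
    nlinarith [hφ' s hs, Real.exp_pos (c * s)]
  have hgrowth : φ 0 ≤ φ t * Real.exp (c * t) := by
    simpa using hmono Set.self_mem_Ici ht ht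
  calc φ 0 * Real.exp (-c * t) ≤ φ t * Real.exp (c * t) * Real.exp (-c * t) := by gcongr
    _ = φ t := by rw [mul_assoc, ← Real.exp_add]; simp

theorem stmt9_general (n : ℕ) (k c δ : ℝ) (hδ : 0 < δ)
    (H : Matrix (Fin n) (Fin n) ℝ) (hH : H.PosDef)
    (θs : Fin n → ℝ) (h₀ : ℝ) (h₁ : Fin n → ℝ) (hh₁ : h₁ ≠ 0)
    (θr : ℝ → (Fin n → ℝ))
    (hsol : ∀ t : ℝ, 0 ≤ t → HasDerivAt θr (reducedRHS n k c δ H h₀ h₁ (θr t)) t) :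
    (∀ t : ℝ, 0 ≤ t →
      hfun n h₀ h₁ θs (θr t + θs) ≥ hfun n h₀ h₁ θs (θr 0 + θs) * Real.exp (-c * t)) ∧
    (0 ≤ hfun n h₀ h₁ θs (θr 0 + θs) →
      ∀ t : ℝ, 0 ≤ t → 0 ≤ hfun n h₀ h₁ θs (θr t + θs)) := by
  have hsymm : H.IsSymm := by simpa using hH.isHermitian
  have hbound (t : ℝ) (ht : 0 ≤ t) :
      hfun n h₀ h₁ θs (θr 0 + θs) * Real.exp (-c * t) ≤ hfun n h₀ h₁ θs (θr t + θs) := by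
    simp only [hfun_add_center]
    exact mul_exp_le_of_hasDerivAt_ge c (fun s hs => ((hsol s hs).const_dotProduct h₁).const_add h₀)
      (fun s _ => neg_mul_le_dotProduct_reducedRHS k c hδ.le hsymm h₀ hh₁ (θr s)) ht
  exact ⟨hbound, fun h0 t ht => (mul_nonneg h0 (Real.exp_pos _).le).trans (hbound t ht)⟩

/-- Safety of the reduced system: along any solution of the reduced model,
`h(θ̃_r(t) + θ*) ≥ h(θ̃_r(0) + θ*)e^{−ct}` for all `t ≥ 0`; in particular the safe
set `{θ̃ : h(θ̃ + θ*) ≥ 0}` is forward invariant. -/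
theorem stmt9 (n : ℕ) (hn : 1 ≤ n) (k c δ : ℝ) (hk : 0 < k) (hc : 0 < c) (hδ : 0 < δ)
    (H : Matrix (Fin n) (Fin n) ℝ) (hH : H.PosDef)
    (θs : Fin n → ℝ) (h₀ : ℝ) (h₁ : Fin n → ℝ) (hh₁ : h₁ ≠ 0)
    (θr : ℝ → (Fin n → ℝ))
    (hsol : ∀ t : ℝ, 0 ≤ t → HasDerivAt θr (reducedRHS n k c δ H h₀ h₁ (θr t)) t) :
    (∀ t : ℝ, 0 ≤ t →
      hfun n h₀ h₁ θs (θr t + θs) ≥ hfun n h₀ h₁ θs (θr 0 + θs) * Real.exp (-c * t)) ∧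
    (0 ≤ hfun n h₀ h₁ θs (θr 0 + θs) →
      ∀ t : ℝ, 0 ≤ t → 0 ≤ hfun n h₀ h₁ θs (θr t + θs)) :=
  stmt9_general n k c δ hδ H hH θs h₀ h₁ hh₁ θr hsol
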